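/- arXiv:math/0005202 — 3 statements merged into one kernel-verified Lean document; each statement's English description precedes it below -/
import Mathlib

section
/- Let F be a family of m-dimensional linear subspaces of a projective space (equivalently, (m+1)-dimensional vector subspaces of a vector space V) such that any two distinct members of F intersect in a subspace of dimension m-1 (i.e., vector dimension m). Then either all members of F are contained in a single (m+1)-dimensional projective subspace (i.e., a common (m+2)-dimensional vector subspace), or all members of F contain a common (m-1)-dimensional projective subspace (i.e., a common m-dimensional vector subspace). -/
open Module Submodule

/-- If `S, T ≤ D` have rank `m`, `D` has rank `m+1`, and `S ≠ T`, then `S ⊔ T = D`. -/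
private lemma aux_sup_eq {K V : Type*} [Field K] [AddCommGroup V] [Module K V]
    [FiniteDimensional K V] {m : ℕ} {S T D : Submodule K V}
    (hS : S ≤ D) (hT : T ≤ D) (hSr : finrank K S = m) (hTr : finrank K T = m)
    (hDr : finrank K D = m + 1) (hne : S ≠ T) : S ⊔ T = D := by
  have hinf : finrank K ↥(S ⊓ T) < m := by
    rcases lt_or_eq_of_le (hSr ▸ Submodule.finrank_mono (inf_le_left : S ⊓ T ≤ S)) with h | h
    · exact h
    · exfalso
      have : S ⊓ T = S := Submodule.eq_of_le_of_finrank_le inf_le_left (le_of_eq (hSr ▸ h.symm))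
      have hST : S ≤ T := by rw [← this]; exact inf_le_right
      exact hne (Submodule.eq_of_le_of_finrank_le hST (by rw [hSr, hTr]))
  have hsum := Submodule.finrank_sup_add_finrank_inf_eq S T
  have hge : m + 1 ≤ finrank K ↥(S ⊔ T) := by omega
  exact Submodule.eq_of_le_of_finrank_le (sup_le hS hT) (by omega)

/-- **Linear Lemma.** Any family of projective `m`-planes (i.e. `(m+1)`-dimensional
vector subspaces) such that any two distinct members meet in a projective
`(m-1)`-plane (i.e. an `m`-dimensional vector subspace) either lies in a fixed
projective `(m+1)`-plane (an `(m+2)`-dimensional vector subspace) or has a common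
projective `(m-1)`-plane (an `m`-dimensional vector subspace) as base locus. -/
theorem linear_lemma {K V : Type*} [Field K] [AddCommGroup V] [Module K V]
    [FiniteDimensional K V] (m : ℕ) (F : Set (Submodule K V))
    (htwo : ∃ A ∈ F, ∃ B ∈ F, A ≠ B)
    (hdim : ∀ A ∈ F, Module.finrank K A = m + 1)
    (hmeet : ∀ A ∈ F, ∀ B ∈ F, A ≠ B → Module.finrank K ↥(A ⊓ B) = m) :
    (∃ L : Submodule K V, Module.finrank K L = m + 2 ∧ ∀ A ∈ F, A ≤ L) ∨
    (∃ L : Submodule K V, Module.finrank K L = m ∧ ∀ A ∈ F, L ≤ A) := by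
  obtain ⟨A, hA, B, hB, hAB⟩ := htwo
  have hsupAB : finrank K ↥(A ⊔ B) = m + 2 := by
    have := Submodule.finrank_sup_add_finrank_inf_eq A B
    rw [hdim A hA, hdim B hB, hmeet A hA B hB hAB] at this
    omega
  by_cases hcase : ∀ C ∈ F, C ≤ A ⊔ B
  · exact Or.inl ⟨A ⊔ B, hsupAB, hcase⟩
  · push_neg at hcase
    obtain ⟨C, hC, hCnle⟩ := hcase
    have hCA : C ≠ A := fun h => hCnle (h ▸ le_sup_left)
    have hCB : C ≠ B := fun h => hCnle (h ▸ le_sup_right)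
    -- A ⊓ C = B ⊓ C
    have hACBC : A ⊓ C = B ⊓ C := by
      by_contra hne
      have := aux_sup_eq (inf_le_right : A ⊓ C ≤ C) (inf_le_right : B ⊓ C ≤ C)
        (hmeet A hA C hC hCA.symm) (hmeet B hB C hC hCB.symm) (hdim C hC) hne
      exact hCnle (this ▸ sup_le (inf_le_left.trans le_sup_left)
        (inf_le_left.trans le_sup_right))
    -- hence A ⊓ C = A ⊓ B =: L
    have hACAB : A ⊓ C = A ⊓ B := by
      refine Submodule.eq_of_le_of_finrank_le
        (le_inf inf_le_left (hACBC ▸ (inf_le_left : B ⊓ C ≤ B) : A ⊓ C ≤ B)) ?_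
      rw [hmeet A hA C hC hCA.symm, hmeet A hA B hB hAB]
    set L := A ⊓ B with hL
    have hLr : finrank K L = m := hmeet A hA B hB hAB
    -- (A ⊔ B) ⊓ C = L
    have hABC : (A ⊔ B) ⊓ C = L := by
      refine (Submodule.eq_of_le_of_finrank_le
        (hACAB ▸ le_inf (inf_le_left.trans le_sup_left) inf_le_right : L ≤ (A ⊔ B) ⊓ C) ?_).symm
      rw [hLr]
      by_contra hgt
      push_neg at hgt
      have hle : finrank K ↥((A ⊔ B) ⊓ C) ≤ m + 1 :=
        (hdim C hC) ▸ Submodule.finrank_mono (inf_le_right : (A ⊔ B) ⊓ C ≤ C)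
      have : (A ⊔ B) ⊓ C = C := Submodule.eq_of_le_of_finrank_le inf_le_right
        (by rw [hdim C hC]; omega)
      exact hCnle (this ▸ (inf_le_left : (A ⊔ B) ⊓ C ≤ A ⊔ B))
    refine Or.inr ⟨L, hLr, fun D hD => ?_⟩
    rcases eq_or_ne D A with rfl | hDA
    · exact inf_le_left
    rcases eq_or_ne D B with rfl | hDB
    · exact inf_le_right
    rcases eq_or_ne D C with rfl | hDC
    · exact hACAB ▸ (inf_le_right : A ⊓ D ≤ D)
    by_cases hDADB : D ⊓ A = D ⊓ B
    · -- D ⊓ A ≤ L with equal ranks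
      have h1 : D ⊓ A ≤ L := le_inf inf_le_right (hDADB ▸ (inf_le_right : D ⊓ B ≤ B))
      have := Submodule.eq_of_le_of_finrank_le h1
        (by rw [hmeet D hD A hA hDA, hLr])
      exact this ▸ (inf_le_left : D ⊓ A ≤ D)
    · -- D ≤ A ⊔ B, then D ⊓ C = L
      have hDsub : D ≤ A ⊔ B := by
        have := aux_sup_eq (inf_le_left : D ⊓ A ≤ D) (inf_le_left : D ⊓ B ≤ D)
          (hmeet D hD A hA hDA) (hmeet D hD B hB hDB) (hdim D hD) hDADB
        rw [← this]
        exact sup_le (inf_le_right.trans le_sup_left) (inf_le_right.trans le_sup_right)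
      have h1 : D ⊓ C ≤ L := hABC ▸ inf_le_inf_right C hDsub
      have := Submodule.eq_of_le_of_finrank_le h1
        (by rw [hmeet D hD C hC hDC, hLr])
      exact this ▸ (inf_le_left : D ⊓ C ≤ D)
end

section
/- Let A, B, C be (m+1)-dimensional vector subspaces of V such that any two of them pairwise intersect in an m-dimensional subspace, and suppose C is not contained in A + B. Then C ∩ (A + B) = A ∩ B. -/
set_option maxHeartbeats 1600000

/-- If `A`, `B`, `C` are `(m+1)`-dimensional subspaces, pairwise meeting in dimension
`m`, and `C` is not contained in `A + B`, then `C ∩ (A + B) = A ∩ B`. -/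
theorem inter_sup_eq_of_not_le {K V : Type*} [Field K] [AddCommGroup V] [Module K V]
    (m : ℕ) (A B C : Submodule K V)
    [FiniteDimensional K A] [FiniteDimensional K B] [FiniteDimensional K C]
    (hA : Module.finrank K A = m + 1) (hB : Module.finrank K B = m + 1)
    (hC : Module.finrank K C = m + 1)
    (hab : Module.finrank K ↥(A ⊓ B) = m) (hac : Module.finrank K ↥(A ⊓ C) = m)
    (hbc : Module.finrank K ↥(B ⊓ C) = m)
    (hnot : ¬ C ≤ A ⊔ B) :
    C ⊓ (A ⊔ B) = A ⊓ B := by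
  set D := C ⊓ (A ⊔ B) with hD
  have hDC : D ≤ C := inf_le_left
  haveI : FiniteDimensional K D := Submodule.finiteDimensional_of_le hDC
  have hDlt : D < C := lt_of_le_of_ne hDC (fun h => hnot (h ▸ inf_le_right))
  have hDrank : Module.finrank K D < m + 1 := hC ▸ Submodule.finrank_lt_finrank_of_lt hDlt
  have hACD : A ⊓ C ≤ D := le_inf inf_le_right (le_trans inf_le_left le_sup_left)
  have hBCD : B ⊓ C ≤ D := le_inf inf_le_right (le_trans inf_le_left le_sup_right)
  have hDm : Module.finrank K D = m :=
    le_antisymm (Nat.lt_succ_iff.mp hDrank) (hac ▸ Submodule.finrank_mono hACD)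
  have hAC : A ⊓ C = D := Submodule.eq_of_le_of_finrank_eq hACD (hac.trans hDm.symm)
  have hBC : B ⊓ C = D := Submodule.eq_of_le_of_finrank_eq hBCD (hbc.trans hDm.symm)
  have hle : A ⊓ C ≤ A ⊓ B := le_inf inf_le_left (by rw [hAC, ← hBC]; exact inf_le_left)
  have : A ⊓ C = A ⊓ B := Submodule.eq_of_le_of_finrank_eq hle (hac.trans hab.symm)
  rw [← this, hAC]
end

section
/- If G_{h,k}(X) = G_{h,k+1}(X) for some 0 ≤ h < k, then the k-th secant variety S_k(X) equals P^r. -/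
open Submodule

noncomputable section

/-- Polynomial functions on a complex module: the subalgebra of functions generated by
the linear functionals. -/
def PolyFun (W : Type*) [AddCommGroup W] [Module ℂ W] : Subalgebra ℂ (W → ℂ) :=
  Algebra.adjoin ℂ {f : W → ℂ | IsLinearMap ℂ f}

/-- A subset of a complex module is algebraic (Zariski closed) if it is the common zero
set of a family of polynomial functions. -/
def IsAlgSet {W : Type*} [AddCommGroup W] [Module ℂ W] (X : Set W) : Prop :=
  ∃ S : Set (W → ℂ), S ⊆ (PolyFun W : Set (W → ℂ)) ∧ X = {x | ∀ f ∈ S, f x = 0}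

/-- Zariski closure. -/
def zcl {W : Type*} [AddCommGroup W] [Module ℂ W] (A : Set W) : Set W :=
  ⋂₀ {Y | IsAlgSet Y ∧ A ⊆ Y}

/-- Irreducible algebraic set. -/
def IsIrrAlg {W : Type*} [AddCommGroup W] [Module ℂ W] (X : Set W) : Prop :=
  X.Nonempty ∧ IsAlgSet X ∧
    ∀ Y Z : Set W, IsAlgSet Y → IsAlgSet Z → X ⊆ Y ∪ Z → X ⊆ Y ∨ X ⊆ Z

/-- Dimension of an (affine) algebraic set: the supremum of the lengths of strict chains
of irreducible algebraic subsets contained in it. -/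
def adim {W : Type*} [AddCommGroup W] [Module ℂ W] (X : Set W) : ℕ∞ :=
  sSup {d : ℕ∞ | ∃ n : ℕ, d = (n : ℕ∞) ∧
    ∃ c : Fin (n + 1) → Set W, StrictMono c ∧ ∀ i, IsIrrAlg (c i) ∧ c i ⊆ X}

/-- Projective dimension of a cone: one less than the dimension of the affine cone. -/
def pdim {W : Type*} [AddCommGroup W] [Module ℂ W] (X : Set W) : ℕ∞ := adim X - 1

/-- A cone in a complex module (the affine cone of a projective set). -/
def IsCone {W : Type*} [AddCommGroup W] [Module ℂ W] (X : Set W) : Prop :=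
  (0 : W) ∈ X ∧ ∀ (c : ℂ) (x : W), x ∈ X → c • x ∈ X

/-- The affine cone of an integral projective variety: an irreducible algebraic cone,
different from the origin alone. -/
def IsProjVar {W : Type*} [AddCommGroup W] [Module ℂ W] (X : Set W) : Prop :=
  IsAlgSet X ∧ IsCone X ∧ IsIrrAlg X ∧ X ≠ {0}

/-- Non-degenerate: the cone spans the ambient space. -/
def Nondeg {W : Type*} [AddCommGroup W] [Module ℂ W] (X : Set W) : Prop :=
  Submodule.span ℂ X = ⊤

/-- The projective set is a cone over some vertex: there is a point `v` (vertex) of the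
variety such that the variety is a union of lines through the vertex. -/
def IsConeVar {W : Type*} [AddCommGroup W] [Module ℂ W] (X : Set W) : Prop :=
  ∃ v ∈ X, v ≠ 0 ∧ ∀ x ∈ X, ∀ a b : ℂ, a • v + b • x ∈ X

/-- Affine cone of the `k`-th secant variety `S_k(X)`: the Zariski closure of the union
of the linear spans of `k+1` points of `X`. -/
def Sec {W : Type*} [AddCommGroup W] [Module ℂ W] (X : Set W) (k : ℕ) : Set W :=
  zcl (⋃ p ∈ {p : Fin (k + 1) → W | ∀ i, p i ∈ X},
    (Submodule.span ℂ (Set.range p) : Set W))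

/-- Plücker points of the spans of `(k+1)`-tuples of points of `X`: the raw affine cone
over the image of the span map `Φ : X^{k+1} ⇢ G(k,r)` in Plücker coordinates. -/
def GkConePre {W : Type*} [AddCommGroup W] [Module ℂ W] (X : Set W) (k : ℕ) :
    Set (ExteriorAlgebra ℂ W) :=
  {w | ∃ p : Fin (k + 1) → W, (∀ i, p i ∈ X) ∧ w = ExteriorAlgebra.ιMulti ℂ (k + 1) p}

/-- Affine cone over `G_k(X)` (in Plücker coordinates): Zariski closure of the cone over
the image of the span map. -/
def GkCone {W : Type*} [AddCommGroup W] [Module ℂ W] (X : Set W) (k : ℕ) :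
    Set (ExteriorAlgebra ℂ W) :=
  zcl (GkConePre X k)

/-- `G_k(X)` as a set of `(k+1)`-dimensional subspaces (projective `k`-planes): those
whose Plücker point lies in the closure of the image of the span map. -/
def Gk {W : Type*} [AddCommGroup W] [Module ℂ W] (X : Set W) (k : ℕ) :
    Set (Submodule ℂ W) :=
  {U | Module.finrank ℂ U = k + 1 ∧
    ∀ p : Fin (k + 1) → W, (∀ i, p i ∈ U) →
      ExteriorAlgebra.ιMulti ℂ (k + 1) p ∈ GkCone X k}

/-- Raw cone of Plücker points of `h`-planes contained in some `(k+1)`-secant `k`-plane. -/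
def GhkConePre {W : Type*} [AddCommGroup W] [Module ℂ W] (X : Set W) (h k : ℕ) :
    Set (ExteriorAlgebra ℂ W) :=
  {w | ∃ (p : Fin (k + 1) → W) (q : Fin (h + 1) → W), (∀ i, p i ∈ X) ∧
    (∀ j, q j ∈ Submodule.span ℂ (Set.range p)) ∧
    w = ExteriorAlgebra.ιMulti ℂ (h + 1) q}

/-- Affine cone over `G_{h,k}(X)` in Plücker coordinates. -/
def GhkCone {W : Type*} [AddCommGroup W] [Module ℂ W] (X : Set W) (h k : ℕ) :
    Set (ExteriorAlgebra ℂ W) :=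
  zcl (GhkConePre X h k)


/-!
Contracting a Plücker vector `q₀ ∧ ⋯ ∧ q_h` against `h` linear forms is a linear map
`⋀ W → W` whose value always lies in the span of the `qⱼ`, so it carries the raw cone of
`G_{h,k}(X)` into the union of `(k+1)`-secant `k`-planes and hence, being linear, its Zariski
closure into `S_k(X)`. A point `x` of a `(k+2)`-secant `(k+1)`-plane that lies on no
`(k+1)`-secant `k`-plane through `k+1` of the same points spans, together with `h` of these
points, an `h`-plane of `G_{h,k+1}(X) = G_{h,k}(X)`; contracting against the dual forms of
those `h` points returns `x`. Thus `S_{k+1}(X) ⊆ S_k(X)`, so `S_k(X)` is stable under adding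
multiples of points of `X` and contains their span, which is everything by non-degeneracy.
-/

section ZariskiClosure

variable {W W₂ : Type*} [AddCommGroup W] [Module ℂ W] [AddCommGroup W₂] [Module ℂ W₂]

lemma subset_zcl (A : Set W) : A ⊆ zcl A :=
  fun _ hx => Set.mem_sInter.2 fun _ hY => hY.2 hx

lemma zcl_subset {A Y : Set W} (hY : IsAlgSet Y) (h : A ⊆ Y) : zcl A ⊆ Y :=
  Set.sInter_subset_of_mem ⟨hY, h⟩

lemma zcl_subset_zcl_of_subset_zcl {A B : Set W} (h : A ⊆ zcl B) : zcl A ⊆ zcl B :=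
  fun _ hx => Set.mem_sInter.2 fun _ hY => zcl_subset hY.1 (h.trans (zcl_subset hY.1 hY.2)) hx

lemma comp_affineMap_mem_polyFun (φ : W →ᵃ[ℂ] W₂) {f : W₂ → ℂ} (hf : f ∈ PolyFun W₂) :
    f ∘ φ ∈ PolyFun W := by
  induction hf using Algebra.adjoin_induction with
  | mem g hg =>
    have hlin : g ∘ φ.linear ∈ PolyFun W :=
      Algebra.subset_adjoin (IsLinearMap.mk' g hg ∘ₗ φ.linear).isLinear
    have hdecomp : g ∘ φ = g ∘ φ.linear + algebraMap ℂ (W → ℂ) (g (φ 0)) := by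
      ext w
      simp [congrFun φ.decomp w, hg.map_add]
    rw [hdecomp]
    exact add_mem hlin (Subalgebra.algebraMap_mem _ _)
  | algebraMap c => exact Subalgebra.algebraMap_mem _ c
  | add _ _ _ _ hf hg => exact add_mem hf hg
  | mul _ _ _ _ hf hg => exact mul_mem hf hg

lemma IsAlgSet.preimage_affineMap {Y : Set W₂} (hY : IsAlgSet Y) (φ : W →ᵃ[ℂ] W₂) :
    IsAlgSet (φ ⁻¹' Y) := by
  obtain ⟨S, hS, rfl⟩ := hY
  refine ⟨(· ∘ φ) '' S, ?_, by ext; simp⟩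
  rintro _ ⟨f, hf, rfl⟩
  exact comp_affineMap_mem_polyFun φ (hS hf)

lemma mapsTo_zcl (φ : W →ᵃ[ℂ] W₂) {A : Set W} {B : Set W₂} (h : Set.MapsTo φ A B) :
    Set.MapsTo φ (zcl A) (zcl B) := fun _ hx =>
  Set.mem_sInter.2 fun _ hY => zcl_subset (hY.1.preimage_affineMap φ) (h.mono_right hY.2) hx

end ZariskiClosure

section Contraction

variable {R M : Type*} [CommRing R] [AddCommGroup M] [Module R M] {h : ℕ}

def contraction (f : Fin h → Module.Dual R M) :
    MultilinearMap R (fun _ : Fin (h + 1) => M) M :=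
  MultilinearMap.uncurryRight
    ((LinearMap.lsmul R M).compMultilinearMap
      ((MultilinearMap.mkPiAlgebra R (Fin h) R).compLinearMap f))

lemma contraction_apply (f : Fin h → Module.Dual R M) (q : Fin (h + 1) → M) :
    contraction f q = (∏ i, f i (q i.castSucc)) • q (Fin.last h) := by
  simp [contraction, MultilinearMap.uncurryRight_apply, Fin.init]

lemma alternatization_contraction_mem (f : Fin h → Module.Dual R M) {P : Submodule R M}
    {q : Fin (h + 1) → M} (hq : ∀ j, q j ∈ P) :
    (contraction f).alternatization q ∈ P := by
  rw [MultilinearMap.alternatization_apply]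
  refine P.sum_mem fun σ _ => P.smul_of_tower_mem _ ?_
  rw [MultilinearMap.domDomCongr_apply, contraction_apply]
  exact P.smul_mem _ (hq _)

lemma alternatization_contraction_snoc {f : Fin h → Module.Dual R M} {v : Fin h → M} {x : M}
    (hfv : ∀ i l, f i (v l) = if i = l then 1 else 0) (hfx : ∀ i, f i x = 0) :
    (contraction f).alternatization (Fin.snoc v x) = x := by
  rw [MultilinearMap.alternatization_apply, Finset.sum_eq_single (1 : Equiv.Perm (Fin (h + 1)))]
  · simp [contraction_apply, hfv]
  · -- any other permutation moves some `castSucc i`, which kills the factor `f i`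
    intro σ _ hσ
    obtain ⟨i, hi⟩ : ∃ i : Fin h, σ i.castSucc ≠ i.castSucc := by
      by_contra! hfix
      refine hσ (Equiv.ext fun j => Fin.lastCases ?_ hfix j)
      obtain ⟨l, hl⟩ | hlast := (σ (Fin.last h)).eq_castSucc_or_eq_last
      · exact absurd (σ.injective (hl.trans (hfix l).symm)) (Fin.castSucc_lt_last l).ne'
      · exact hlast
    have hzero : f i (Fin.snoc (α := fun _ => M) v x (σ i.castSucc)) = 0 := by
      obtain ⟨l, hl⟩ | hlast := (σ i.castSucc).eq_castSucc_or_eq_last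
      · rw [hl, Fin.snoc_castSucc, hfv, if_neg (fun hil => hi (hl.trans (by rw [hil])))]
      · rw [hlast, Fin.snoc_last, hfx]
    rw [MultilinearMap.domDomCongr_apply, contraction_apply,
      Finset.prod_eq_zero (Finset.mem_univ i) hzero, zero_smul, smul_zero]
  · exact fun h1 => absurd (Finset.mem_univ _) h1

def exteriorContraction (f : Fin h → Module.Dual R M) : ExteriorAlgebra R M →ₗ[R] M :=
  ExteriorAlgebra.liftAlternating (Pi.single (h + 1) (contraction f).alternatization)

lemma exteriorContraction_ιMulti (f : Fin h → Module.Dual R M) (q : Fin (h + 1) → M) :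
    exteriorContraction f (ExteriorAlgebra.ιMulti R (h + 1) q) =
      (contraction f).alternatization q := by
  rw [exteriorContraction, ExteriorAlgebra.liftAlternating_apply_ιMulti, Pi.single_eq_same]

end Contraction

section LinearAlgebra

variable {K V : Type*} [DivisionRing K] [AddCommGroup V] [Module K V]

lemma span_range_eq_span_range_removeNth {n : ℕ} {p : Fin (n + 1) → V} {i : Fin (n + 1)}
    (hi : p i ∈ span K (Set.range (i.removeNth p))) :
    span K (Set.range p) = span K (Set.range (i.removeNth p)) := by
  conv_lhs => rw [← Fin.insertNth_self_removeNth i p, Fin.range_insertNth]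
  exact span_insert_eq_span hi

lemma linearIndependent_of_forall_notMem_span_removeNth {n : ℕ} {p : Fin (n + 1) → V} {x : V}
    (hx : x ∈ span K (Set.range p))
    (hnot : ∀ i : Fin (n + 1), x ∉ span K (Set.range (i.removeNth p))) :
    LinearIndependent K p := by
  rw [linearIndependent_iff_notMem_span]
  intro i hi
  rw [← Set.compl_eq_univ_sdiff, ← Fin.range_succAbove, ← Set.range_comp] at hi
  exact hnot i (span_range_eq_span_range_removeNth hi ▸ hx)

lemma exists_linearIndependent_snoc {n h : ℕ} (hh : h ≤ n) {p : Fin n → V}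
    (hp : LinearIndependent K p) {x : V} (hx : x ∉ span K (Set.range p)) :
    ∃ v : Fin h → V, Set.range v ⊆ Set.range p ∧ LinearIndependent K (Fin.snoc v x) := by
  refine ⟨p ∘ Fin.castLE hh, Set.range_comp_subset_range _ _,
    linearIndependent_finSnoc.2 ⟨hp.comp _ (Fin.castLE_injective hh), fun hxv => hx ?_⟩⟩
  exact span_mono (Set.range_comp_subset_range _ _) hxv

end LinearAlgebra

lemma LinearIndependent.exists_dual_family {K V ι : Type*} [Field K] [AddCommGroup V]
    [Module K V] [DecidableEq ι] {q : ι → V} (hq : LinearIndependent K q) :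
    ∃ f : ι → Module.Dual K V, ∀ i j, f i (q j) = if i = j then 1 else 0 := by
  choose f hf using fun i => LinearMap.exists_extend ((Module.Basis.span hq).coord i)
  refine ⟨f, fun i j => ?_⟩
  have hj := congr($(hf i) (Module.Basis.span hq j))
  rw [Module.Basis.coord_apply, Module.Basis.repr_self, Finsupp.single_apply,
    LinearMap.comp_apply, Submodule.subtype_apply, Module.Basis.span_apply] at hj
  exact hj.trans (if_congr eq_comm rfl rfl)

section Secant

variable {W : Type*} [AddCommGroup W] [Module ℂ W] {X : Set W} {h k : ℕ}

def secantUnion (X : Set W) (k : ℕ) : Set W :=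
  ⋃ p ∈ {p : Fin (k + 1) → W | ∀ i, p i ∈ X}, (span ℂ (Set.range p) : Set W)

lemma mem_secantUnion {x : W} (p : Fin (k + 1) → W) (hp : ∀ i, p i ∈ X)
    (hx : x ∈ span ℂ (Set.range p)) : x ∈ secantUnion X k :=
  Set.mem_biUnion hp hx

lemma add_smul_mem_secantUnion_succ {w y : W} (hw : w ∈ secantUnion X k) (hy : y ∈ X)
    (c : ℂ) : w + c • y ∈ secantUnion X (k + 1) := by
  obtain ⟨p, hp, hwp⟩ := Set.mem_iUnion₂.1 hw
  refine mem_secantUnion (Fin.snoc p y) (Fin.lastCases (by simpa) (by simpa using hp)) ?_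
  refine add_mem (span_mono ?_ hwp) (smul_mem _ _ (subset_span ⟨Fin.last _, by simp⟩))
  rintro _ ⟨i, rfl⟩
  exact ⟨i.castSucc, by simp⟩

lemma mem_zcl_secantUnion_of_ιMulti_mem_GhkCone {q : Fin (h + 1) → W}
    (hq : LinearIndependent ℂ q) (hmem : ExteriorAlgebra.ιMulti ℂ (h + 1) q ∈ GhkCone X h k) :
    q (Fin.last h) ∈ zcl (secantUnion X k) := by
  obtain ⟨F, hF⟩ := hq.exists_dual_family
  let L := exteriorContraction fun i : Fin h => F i.castSucc
  have hmaps : Set.MapsTo L (GhkConePre X h k) (secantUnion X k) := by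
    rintro _ ⟨p, q', hp, hq', rfl⟩
    rw [exteriorContraction_ιMulti]
    exact mem_secantUnion p hp (alternatization_contraction_mem _ hq')
  have hLq : L (ExteriorAlgebra.ιMulti ℂ (h + 1) q) = q (Fin.last h) := by
    conv_lhs => rw [← Fin.snoc_init_self q]
    rw [exteriorContraction_ιMulti]
    refine alternatization_contraction_snoc (fun i l => ?_) (fun i => ?_)
    · simp [Fin.init, hF]
    · simp [hF, (Fin.castSucc_lt_last i).ne]
  exact hLq ▸ mapsTo_zcl L.toAffineMap hmaps hmem

lemma secantUnion_succ_subset_zcl (hhk : h < k) (heq : GhkCone X h k = GhkCone X h (k + 1)) :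
    secantUnion X (k + 1) ⊆ zcl (secantUnion X k) := by
  intro x hx
  obtain ⟨p, hp, hxp⟩ := Set.mem_iUnion₂.1 hx
  by_cases hsub : ∃ i : Fin (k + 2), x ∈ span ℂ (Set.range (i.removeNth p))
  · obtain ⟨i, hi⟩ := hsub
    exact subset_zcl _ (mem_secantUnion _ (fun j => hp _) hi)
  simp only [not_exists] at hsub
  have hinit : LinearIndependent ℂ (Fin.init p) :=
    (linearIndependent_of_forall_notMem_span_removeNth hxp hsub).comp _ (Fin.castSucc_injective _)
  obtain ⟨v, hvp, hv⟩ := exists_linearIndependent_snoc (h := h) (by omega) hinit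
    (by simpa using hsub (Fin.last _))
  have hvx : ∀ j, (Fin.snoc v x : Fin (h + 1) → W) j ∈ span ℂ (Set.range p) := by
    refine Fin.lastCases (by simpa using hxp) fun l => ?_
    obtain ⟨i, hi⟩ := hvp ⟨l, rfl⟩
    rw [Fin.snoc_castSucc, ← hi]
    exact subset_span ⟨i.castSucc, rfl⟩
  have hmem : ExteriorAlgebra.ιMulti ℂ (h + 1) (Fin.snoc v x) ∈ GhkCone X h k :=
    heq ▸ subset_zcl _ ⟨p, _, hp, hvx, rfl⟩
  simpa using mem_zcl_secantUnion_of_ιMulti_mem_GhkCone hv hmem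

lemma add_smul_mem_zcl_secantUnion (hsucc : secantUnion X (k + 1) ⊆ zcl (secantUnion X k))
    {w y : W} (hw : w ∈ zcl (secantUnion X k)) (hy : y ∈ X) (c : ℂ) :
    w + c • y ∈ zcl (secantUnion X k) :=
  zcl_subset_zcl_of_subset_zcl hsucc <|
    mapsTo_zcl (AffineEquiv.vaddConst ℂ (c • y)).toAffineMap
      (fun _ ha => add_smul_mem_secantUnion_succ ha hy c) hw

lemma span_subset_zcl_secantUnion (hX0 : (0 : W) ∈ X)
    (hsucc : secantUnion X (k + 1) ⊆ zcl (secantUnion X k)) :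
    (span ℂ X : Set W) ⊆ zcl (secantUnion X k) := by
  intro z hz
  suffices ∀ c : ℂ, ∀ w ∈ zcl (secantUnion X k), w + c • z ∈ zcl (secantUnion X k) by
    simpa using this 1 0 (subset_zcl _ (mem_secantUnion (fun _ => 0) (fun _ => hX0) (zero_mem _)))
  induction hz using Submodule.span_induction with
  | mem y hy => exact fun c w hw => add_smul_mem_zcl_secantUnion hsucc hw hy c
  | zero => exact fun c w hw => by simpa using hw
  | add _ _ _ _ ha hb =>
    exact fun c w hw => by simpa [smul_add, add_assoc] using hb c _ (ha c w hw)
  | smul a _ _ hb => exact fun c w hw => by simpa [smul_smul] using hb (c * a) w hw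

end Secant

/-- If `G_{h,k}(X) = G_{h,k+1}(X)` for some `0 ≤ h < k`, then `S_k(X) = P^r`. -/
theorem Sec_eq_univ_of_Ghk_eq (r h k : ℕ) (hhk : h < k)
    (X : Set (Fin (r + 1) → ℂ)) (hX : IsProjVar X) (hnd : Nondeg X)
    (heq : GhkCone X h k = GhkCone X h (k + 1)) :
    Sec X k = Set.univ :=
  Set.eq_univ_of_forall fun _ =>
    span_subset_zcl_secantUnion hX.2.1.1 (secantUnion_succ_subset_zcl hhk heq)
      (hnd ▸ Submodule.mem_top)
end
end
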